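/- arXiv:2111.08255 — 2 statements merged into one kernel-verified Lean document; each statement's English description precedes it below -/
import Mathlib

section
/- Let L: ℝᴺ → ℝ be a quadratic functional and K a linear map on ℝᴺ such that L(Kf) ≤ L(f) for all f, with strict inequality L(Kf) < L(f) whenever L(f) > 0, and Kf = f whenever L(f) = 0. If additionally L(f) ≥ 0 for all f and L is continuous, and the sublevel sets {f : L(f) ≤ L(f₀)} are compact, then for every f₀ the sequence L(Kᵐ f₀) converges to 0 as m → ∞. -/
/-!
Along an orbit of `K`, the values `L (Kᵐ f₀)` decrease to some limit `c ≥ 0`. The orbit stays in the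
compact sublevel set of `f₀`, so it has a cluster point `g`; by continuity both `L g` and
`L (K g)` equal `c`. Strict descent off the zero set of `L` then forces `c = 0`.
-/

open Filter Topology

theorem MapClusterPt.eq_of_tendsto {X ι : Type*} [TopologicalSpace X] [T2Space X]
    {F : Filter ι} {u : ι → X} {x y : X} (hx : MapClusterPt x F u) (hu : Tendsto u F (𝓝 y)) :
    x = y :=
  eq_of_nhds_neBot (hx.neBot.mono (inf_le_inf_left _ hu))

theorem QuadraticMap.continuous_of_finiteDimensional {𝕜 E : Type*} [NontriviallyNormedField 𝕜]
    [CompleteSpace 𝕜] [Invertible (2 : 𝕜)] [NormedAddCommGroup E] [NormedSpace 𝕜 E]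
    [FiniteDimensional 𝕜 E] (Q : QuadraticForm 𝕜 E) : Continuous Q := by
  let B : E →ₗ[𝕜] E →L[𝕜] 𝕜 :=
    LinearMap.toContinuousLinearMap.toLinearMap ∘ₗ QuadraticMap.associated Q
  have hQ : ⇑Q = fun x => B x x :=
    funext fun x => (QuadraticMap.associated_eq_self_apply 𝕜 Q x).symm
  rw [hQ]
  exact B.continuous_of_finiteDimensional.clm_apply continuous_id

section Descent

variable {X : Type*} {V : X → ℝ} {T : X → X}

theorem antitone_comp_iterate (hle : ∀ x, V (T x) ≤ V x) (x : X) :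
    Antitone fun m => V (T^[m] x) :=
  antitone_nat_of_succ_le fun m => by
    simpa only [Function.iterate_succ_apply'] using hle (T^[m] x)

variable [TopologicalSpace X]

theorem exists_apply_eq_apply_map_eq_of_tendsto_comp_iterate (hV : Continuous V)
    (hT : Continuous T) (hle : ∀ x, V (T x) ≤ V x) {x₀ : X}
    (hK : IsCompact {x | V x ≤ V x₀}) {c : ℝ}
    (hc : Tendsto (fun m => V (T^[m] x₀)) atTop (𝓝 c)) :
    ∃ g, V g = c ∧ V (T g) = c := by
  have horbit : ∀ m, T^[m] x₀ ∈ {x | V x ≤ V x₀} := fun m =>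
    antitone_comp_iterate hle x₀ (Nat.zero_le m)
  obtain ⟨g, -, hg⟩ :=
    hK.exists_mapClusterPt_of_frequently (Frequently.of_forall (f := atTop) horbit)
  have hc_succ : Tendsto (fun m => V (T (T^[m] x₀))) atTop (𝓝 c) := by
    simpa only [Function.comp_def, Function.iterate_succ_apply'] using
      hc.comp (tendsto_add_atTop_nat 1)
  exact ⟨g, (hg.continuousAt_comp hV.continuousAt).eq_of_tendsto hc,
    (hg.continuousAt_comp (hV.comp hT).continuousAt).eq_of_tendsto hc_succ⟩

theorem tendsto_comp_iterate_zero_of_strict_descent (hV : Continuous V) (hT : Continuous T)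
    (hV₀ : ∀ x, 0 ≤ V x) (hle : ∀ x, V (T x) ≤ V x) (hlt : ∀ x, 0 < V x → V (T x) < V x)
    {x₀ : X} (hK : IsCompact {x | V x ≤ V x₀}) :
    Tendsto (fun m => V (T^[m] x₀)) atTop (𝓝 0) := by
  have hc := tendsto_atTop_ciInf (antitone_comp_iterate hle x₀)
    ⟨0, by rintro _ ⟨m, rfl⟩; exact hV₀ _⟩
  obtain ⟨g, hg, hTg⟩ := exists_apply_eq_apply_map_eq_of_tendsto_comp_iterate hV hT hle hK hc
  have hc₀ : 0 ≤ ⨅ m, V (T^[m] x₀) := hg ▸ hV₀ g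
  suffices ¬ 0 < ⨅ m, V (T^[m] x₀) by
    rwa [le_antisymm (not_lt.mp this) hc₀] at hc
  intro hpos
  exact (hlt g (hg ▸ hpos)).ne (hTg.trans hg.symm)

end Descent

theorem iterative_descent_tendsto_zero_general (N : ℕ)
    (L : QuadraticForm ℝ (Fin N → ℝ))
    (K : (Fin N → ℝ) →ₗ[ℝ] (Fin N → ℝ))
    (hnonneg : ∀ f, 0 ≤ L f)
    (hdec : ∀ f, L (K f) ≤ L f)
    (hstrict : ∀ f, 0 < L f → L (K f) < L f)
    (hcompact : ∀ f₀ : Fin N → ℝ, IsCompact {f : Fin N → ℝ | L f ≤ L f₀}) :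
    ∀ f₀ : Fin N → ℝ,
      Tendsto (fun m : ℕ => L ((⇑K)^[m] f₀)) atTop (nhds 0) := fun f₀ =>
  tendsto_comp_iterate_zero_of_strict_descent L.continuous_of_finiteDimensional
    K.continuous_of_finiteDimensional hnonneg hdec hstrict (hcompact f₀)

theorem iterative_descent_tendsto_zero (N : ℕ)
    (L : QuadraticForm ℝ (Fin N → ℝ))
    (K : (Fin N → ℝ) →ₗ[ℝ] (Fin N → ℝ))
    (hcont : Continuous fun f : Fin N → ℝ => L f)
    (hnonneg : ∀ f, 0 ≤ L f)
    (hdec : ∀ f, L (K f) ≤ L f)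
    (hstrict : ∀ f, 0 < L f → L (K f) < L f)
    (hfix : ∀ f, L f = 0 → K f = f)
    (hcompact : ∀ f₀ : Fin N → ℝ, IsCompact {f : Fin N → ℝ | L f ≤ L f₀}) :
    ∀ f₀ : Fin N → ℝ,
      Tendsto (fun m : ℕ => L ((⇑K)^[m] f₀)) atTop (nhds 0) :=
  iterative_descent_tendsto_zero_general N L K hnonneg hdec hstrict hcompact
end

section
/- Let M₁ and M₂ be symmetric real N×N matrices with eigenvalues in [0,1] (shrinking smoothers), and suppose the backfitting update for two components with data y = 0 is given by the linear map Φ: (f₁, f₂) ↦ (−M₁f₂, −M₂(−M₁f₂)). Then the homogeneous loss L₀(f₁, f₂) = ‖f₁ + f₂‖² + f₁ᵀ(M₁⁻ − I)f₁ + f₂ᵀ(M₂⁻ − I)f₂ is non-increasing under each component update, where M_i⁻ denotes a symmetric matrix with M_i M_i⁻ M_i = M_i and f_i assumed to lie in the range of M_i. -/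
open Matrix

/-- Euclidean norm of a finite real vector. -/
noncomputable def enorm {ι : Type*} [Fintype ι] (v : ι → ℝ) : ℝ :=
  Real.sqrt (∑ i, v i ^ 2)

/-!
With the other component `r` fixed, write the free component as `g = M u`. Since `M G M = M`,
the penalty `gᵀ G g` equals `uᵀ M u`, and completing the square gives
`L(M u) = L(-M r) + (u + r)ᵀ M (u + r)`. The last term is nonnegative because `M` is positive
semidefinite, so `-M r` minimizes the loss over the range of `M`; this is applied once to each
component.
-/

namespace Matrix

variable {n : Type*} [Fintype n]

lemma posSemidef_of_transpose_eq_of_eigenvalue_nonneg {M : Matrix n n ℝ} (hM : Mᵀ = M)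
    (heig : ∀ (μ : ℝ) (v : n → ℝ), v ≠ 0 → M *ᵥ v = μ • v → 0 ≤ μ) : M.PosSemidef := by
  classical
  have hherm : M.IsHermitian := by rwa [IsHermitian, conjTranspose_eq_transpose_of_trivial]
  refine hherm.posSemidef_iff_eigenvalues_nonneg.mpr fun i ↦ heig _ _ ?_
    (hherm.mulVec_eigenvectorBasis i)
  exact (WithLp.ofLp_eq_zero 2).ne.2 <| hherm.eigenvectorBasis.orthonormal.ne_zero i

lemma mulVec_dotProduct_mulVec_of_mul_mul_eq_self {R : Type*} [CommSemiring R]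
    {M G : Matrix n n R} (hM : Mᵀ = M) (hG : M * G * M = M) (u : n → R) :
    M *ᵥ u ⬝ᵥ G *ᵥ (M *ᵥ u) = u ⬝ᵥ M *ᵥ u := by
  rw [dotProduct_comm, ← dotProduct_transpose_mulVec, hM, mulVec_mulVec, mulVec_mulVec, hG]

end Matrix

lemma enorm_sq_eq_dotProduct {ι : Type*} [Fintype ι] (v : ι → ℝ) :
    _root_.enorm v ^ 2 = v ⬝ᵥ v := by
  rw [_root_.enorm, Real.sq_sqrt (Finset.sum_nonneg fun i _ ↦ sq_nonneg _)]
  simp [dotProduct, pow_two]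

section PenalizedLoss

variable {n : Type*} [Fintype n] [DecidableEq n]

/-- `L₀` as a function of the component `g` with penalty matrix `G`, the other component `r`
being fixed; the penalty of `r` is a constant and is left out. -/
def penalizedLoss (G : Matrix n n ℝ) (g r : n → ℝ) : ℝ :=
  (g + r) ⬝ᵥ (g + r) + g ⬝ᵥ (G - 1) *ᵥ g

lemma penalizedLoss_mulVec_eq {M G : Matrix n n ℝ} (hM : Mᵀ = M) (hG : M * G * M = M)
    (u r : n → ℝ) :
    penalizedLoss G (M *ᵥ u) r
      = penalizedLoss G (-(M *ᵥ r)) r + (u + r) ⬝ᵥ M *ᵥ (u + r) := by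
  have hswap : ∀ x y : n → ℝ, x ⬝ᵥ M *ᵥ y = y ⬝ᵥ M *ᵥ x := fun x y ↦ by
    simpa only [hM] using dotProduct_transpose_mulVec M x y
  have hGram := mulVec_dotProduct_mulVec_of_mul_mul_eq_self hM hG
  simp only [penalizedLoss, sub_mulVec, one_mulVec, mulVec_neg, mulVec_add, dotProduct_sub,
    dotProduct_add, add_dotProduct, neg_dotProduct, dotProduct_neg, hGram]
  rw [dotProduct_comm (M *ᵥ u) r, dotProduct_comm (M *ᵥ r) r, hswap u r]
  ring

lemma penalizedLoss_neg_mulVec_le {M G : Matrix n n ℝ} (hM : Mᵀ = M) (hG : M * G * M = M)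
    (hpsd : M.PosSemidef) (u r : n → ℝ) :
    penalizedLoss G (-(M *ᵥ r)) r ≤ penalizedLoss G (M *ᵥ u) r := by
  rw [penalizedLoss_mulVec_eq hM hG]
  have hquad := hpsd.dotProduct_mulVec_nonneg (u + r)
  rw [star_trivial] at hquad
  linarith

end PenalizedLoss

theorem backfitting_loss_nonincreasing_general (N : ℕ)
    (M₁ M₂ M₁g M₂g : Matrix (Fin N) (Fin N) ℝ)
    (hM₁sym : M₁ᵀ = M₁) (hM₂sym : M₂ᵀ = M₂)
    (hM₁eig : ∀ (μ : ℝ) (v : Fin N → ℝ), v ≠ 0 → M₁.mulVec v = μ • v →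
      μ ∈ Set.Icc (0 : ℝ) 1)
    (hM₂eig : ∀ (μ : ℝ) (v : Fin N → ℝ), v ≠ 0 → M₂.mulVec v = μ • v →
      μ ∈ Set.Icc (0 : ℝ) 1)
    (hM₁gen : M₁ * M₁g * M₁ = M₁) (hM₂gen : M₂ * M₂g * M₂ = M₂)
    (L₀ : (Fin N → ℝ) → (Fin N → ℝ) → ℝ)
    (hL₀ : ∀ g₁ g₂, L₀ g₁ g₂ = _root_.enorm (g₁ + g₂) ^ 2
      + g₁ ⬝ᵥ ((M₁g - 1).mulVec g₁) + g₂ ⬝ᵥ ((M₂g - 1).mulVec g₂))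
    (f₁ f₂ : Fin N → ℝ)
    (hf₁ : ∃ g, f₁ = M₁.mulVec g) (hf₂ : ∃ g, f₂ = M₂.mulVec g) :
    L₀ (-(M₁.mulVec f₂)) f₂ ≤ L₀ f₁ f₂ ∧
      L₀ (-(M₁.mulVec f₂)) (-(M₂.mulVec (-(M₁.mulVec f₂))))
        ≤ L₀ (-(M₁.mulVec f₂)) f₂ := by
  obtain ⟨u, rfl⟩ := hf₁
  obtain ⟨v, rfl⟩ := hf₂
  have hpsd₁ := posSemidef_of_transpose_eq_of_eigenvalue_nonneg hM₁sym
    fun μ w hw h ↦ (hM₁eig μ w hw h).1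
  have hpsd₂ := posSemidef_of_transpose_eq_of_eigenvalue_nonneg hM₂sym
    fun μ w hw h ↦ (hM₂eig μ w hw h).1
  have hL₀_fst : ∀ g₁ g₂, L₀ g₁ g₂ = penalizedLoss M₁g g₁ g₂ + g₂ ⬝ᵥ (M₂g - 1) *ᵥ g₂ :=
    fun g₁ g₂ ↦ by rw [hL₀, enorm_sq_eq_dotProduct, penalizedLoss]
  have hL₀_snd : ∀ g₁ g₂, L₀ g₁ g₂ = penalizedLoss M₂g g₂ g₁ + g₁ ⬝ᵥ (M₁g - 1) *ᵥ g₁ :=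
    fun g₁ g₂ ↦ by rw [hL₀, enorm_sq_eq_dotProduct, penalizedLoss, add_comm g₂ g₁]; ring
  constructor
  · rw [hL₀_fst, hL₀_fst]
    exact add_le_add_left (penalizedLoss_neg_mulVec_le hM₁sym hM₁gen hpsd₁ u _) _
  · rw [hL₀_snd, hL₀_snd]
    exact add_le_add_left (penalizedLoss_neg_mulVec_le hM₂sym hM₂gen hpsd₂ v _) _

theorem backfitting_loss_nonincreasing (N : ℕ)
    (M₁ M₂ M₁g M₂g : Matrix (Fin N) (Fin N) ℝ)
    (hM₁sym : M₁ᵀ = M₁) (hM₂sym : M₂ᵀ = M₂)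
    (hM₁eig : ∀ (μ : ℝ) (v : Fin N → ℝ), v ≠ 0 → M₁.mulVec v = μ • v →
      μ ∈ Set.Icc (0 : ℝ) 1)
    (hM₂eig : ∀ (μ : ℝ) (v : Fin N → ℝ), v ≠ 0 → M₂.mulVec v = μ • v →
      μ ∈ Set.Icc (0 : ℝ) 1)
    (hM₁gsym : M₁gᵀ = M₁g) (hM₂gsym : M₂gᵀ = M₂g)
    (hM₁gen : M₁ * M₁g * M₁ = M₁) (hM₂gen : M₂ * M₂g * M₂ = M₂)
    (L₀ : (Fin N → ℝ) → (Fin N → ℝ) → ℝ)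
    (hL₀ : ∀ g₁ g₂, L₀ g₁ g₂ = _root_.enorm (g₁ + g₂) ^ 2
      + g₁ ⬝ᵥ ((M₁g - 1).mulVec g₁) + g₂ ⬝ᵥ ((M₂g - 1).mulVec g₂))
    (f₁ f₂ : Fin N → ℝ)
    (hf₁ : ∃ g, f₁ = M₁.mulVec g) (hf₂ : ∃ g, f₂ = M₂.mulVec g) :
    L₀ (-(M₁.mulVec f₂)) f₂ ≤ L₀ f₁ f₂ ∧
      L₀ (-(M₁.mulVec f₂)) (-(M₂.mulVec (-(M₁.mulVec f₂))))
        ≤ L₀ (-(M₁.mulVec f₂)) f₂ :=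
  backfitting_loss_nonincreasing_general N M₁ M₂ M₁g M₂g hM₁sym hM₂sym hM₁eig hM₂eig hM₁gen hM₂gen
    L₀ hL₀ f₁ f₂ hf₁ hf₂
end
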